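/- arXiv:2505.05734 — 8 statements merged into one kernel-verified Lean document; each statement's English description precedes it below -/
import Mathlib

section
/- For the Pell sequence (P_0 = 0, P_1 = 1, P_{n+1} = 2P_n + P_{n-1}), for all positive integers n: 2·∑_{k=1}^{n} k·P_{k-1} = n·P_{n+1} − (n+1)·P_n. -/
theorem two_mul_sum_Icc_mul_pred_of_pell_rec {R : Type*} [CommRing R] (P : ℕ → R)
    (h0 : P 0 = 0) (hrec : ∀ n : ℕ, P (n + 2) = 2 * P (n + 1) + P n) (n : ℕ) :
    2 * ∑ k ∈ Finset.Icc 1 n, (k : R) * P (k - 1) = n * P (n + 1) - (n + 1) * P n := by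
  induction n with
  | zero => simp [h0]
  | succ n ih =>
    rw [Finset.sum_Icc_succ_top (Nat.le_add_left 1 n), mul_add, ih, Nat.add_sub_cancel]
    push_cast
    linear_combination (-((n : R) + 1)) * hrec n

theorem stmt_0_general (P : ℕ → ℤ) (h0 : P 0 = 0)
    (hrec : ∀ n : ℕ, P (n + 2) = 2 * P (n + 1) + P n) :
    ∀ n : ℕ, 1 ≤ n →
      2 * ∑ k ∈ Finset.Icc 1 n, (k : ℤ) * P (k - 1) =
        (n : ℤ) * P (n + 1) - ((n : ℤ) + 1) * P n :=
  fun n _ => two_mul_sum_Icc_mul_pred_of_pell_rec P h0 hrec n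

theorem stmt_0 (P : ℕ → ℤ) (h0 : P 0 = 0) (h1 : P 1 = 1)
    (hrec : ∀ n : ℕ, P (n + 2) = 2 * P (n + 1) + P n) :
    ∀ n : ℕ, 1 ≤ n →
      2 * ∑ k ∈ Finset.Icc 1 n, (k : ℤ) * P (k - 1) =
        (n : ℤ) * P (n + 1) - ((n : ℤ) + 1) * P n :=
  stmt_0_general P h0 hrec
end

section
/- For the Pell sequence, for all positive integers n: 2·∑_{k=1}^{n} k³·P_{k-1} = (n³ + 3n − 3)·P_{n+1} − (n³ + 3n² + 1)·P_n + 3. -/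
/-! Both sides change by the same amount when `n` increases by one: after eliminating
`P (n + 2)` with the recurrence, this is a polynomial identity in `n`, `P n` and `P (n + 1)`.
The identity therefore holds for every sequence satisfying the Pell recurrence, with the
constant `3` replaced by `3 * P 1 + P 0`, its value at `n = 0`. -/

theorem sum_Icc_cube_mul_pell_recurrence {R : Type*} [CommRing R] (P : ℕ → R)
    (hrec : ∀ n : ℕ, P (n + 2) = 2 * P (n + 1) + P n) (n : ℕ) :
    2 * ∑ k ∈ Finset.Icc 1 n, (k : R) ^ 3 * P (k - 1) =
      ((n : R) ^ 3 + 3 * n - 3) * P (n + 1)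
        - ((n : R) ^ 3 + 3 * (n : R) ^ 2 + 1) * P n + 3 * P 1 + P 0 := by
  induction n with
  | zero => simp; ring
  | succ n ih =>
    rw [Finset.sum_Icc_succ_top (Nat.le_add_left 1 n), mul_add, ih, Nat.add_sub_cancel, hrec n]
    push_cast
    ring

theorem stmt_3 (P : ℕ → ℤ) (h0 : P 0 = 0) (h1 : P 1 = 1)
    (hrec : ∀ n : ℕ, P (n + 2) = 2 * P (n + 1) + P n) :
    ∀ n : ℕ, 1 ≤ n →
      2 * ∑ k ∈ Finset.Icc 1 n, (k : ℤ) ^ 3 * P (k - 1) =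
        ((n : ℤ) ^ 3 + 3 * n - 3) * P (n + 1)
          - ((n : ℤ) ^ 3 + 3 * (n : ℤ) ^ 2 + 1) * P n + 3 := by
  intro n _
  rw [sum_Icc_cube_mul_pell_recurrence P hrec n, h0, h1]
  ring
end

section
/- For the Pell sequence, for all positive integers n: 2·∑_{k=1}^{n} k⁴·P_{k-1} = (n⁴ + 6n² − 12n + 13)·P_{n+1} − (n⁴ + 4n³ + 4n − 6)·P_n − 13. -/
/-!
The right-hand side without its constant, `F n`, is a discrete antiderivative of the summand:
one use of the recurrence `P (n + 2) = 2 P (n + 1) + P n` shows `F (n + 1) - F n = 2 (n + 1)⁴ P n`,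
so the sum telescopes to `F n - F 0`, and `F 0 = 13 P 1 + 6 P 0 = 13`.
-/

namespace Pell

variable {R : Type*} [CommRing R]

def fourthMomentPotential (P : ℕ → R) (n : ℕ) : R :=
  ((n : R) ^ 4 + 6 * (n : R) ^ 2 - 12 * n + 13) * P (n + 1)
    - ((n : R) ^ 4 + 4 * (n : R) ^ 3 + 4 * n - 6) * P n

theorem fourthMomentPotential_succ_sub {P : ℕ → R}
    (hrec : ∀ n : ℕ, P (n + 2) = 2 * P (n + 1) + P n) (n : ℕ) :
    fourthMomentPotential P (n + 1) - fourthMomentPotential P n = 2 * ((n + 1 : R) ^ 4 * P n) := by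
  simp only [fourthMomentPotential, hrec n]
  push_cast
  ring

theorem fourthMomentPotential_zero (P : ℕ → R) :
    fourthMomentPotential P 0 = 13 * P 1 + 6 * P 0 := by
  simp only [fourthMomentPotential]
  push_cast
  ring

theorem two_mul_sum_Icc_pow_four_mul {P : ℕ → R}
    (hrec : ∀ n : ℕ, P (n + 2) = 2 * P (n + 1) + P n) (n : ℕ) :
    2 * ∑ k ∈ Finset.Icc 1 n, (k : R) ^ 4 * P (k - 1) =
      fourthMomentPotential P n - fourthMomentPotential P 0 := by
  induction n with
  | zero => simp
  | succ n ih =>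
    rw [Finset.sum_Icc_succ_top (by omega), mul_add, ih, Nat.add_sub_cancel, Nat.cast_succ,
      ← fourthMomentPotential_succ_sub hrec]
    ring

end Pell

theorem stmt_4 (P : ℕ → ℤ) (h0 : P 0 = 0) (h1 : P 1 = 1)
    (hrec : ∀ n : ℕ, P (n + 2) = 2 * P (n + 1) + P n) :
    ∀ n : ℕ, 1 ≤ n →
      2 * ∑ k ∈ Finset.Icc 1 n, (k : ℤ) ^ 4 * P (k - 1) =
        ((n : ℤ) ^ 4 + 6 * (n : ℤ) ^ 2 - 12 * n + 13) * P (n + 1)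
          - ((n : ℤ) ^ 4 + 4 * (n : ℤ) ^ 3 + 4 * n - 6) * P n - 13 := by
  intro n _
  rw [Pell.two_mul_sum_Icc_pow_four_mul hrec, Pell.fourthMomentPotential_zero, h0, h1]
  simp only [Pell.fourthMomentPotential]
  ring
end

section
/- Let (s_n) be the generalized Fibonacci sequence with parameters a, b ∈ ℕ⁺, c_0, c_1 ∈ ℤ, (c_0,c_1) ≠ (0,0), and assume both 2c_1 − j_1·c_0 and 2c_1 − j_2·c_0 are nonzero, where j_{1,2} = a ± √(a²+4b). Then the sequence of ratios s_{n+1}/s_n (defined for n large enough so that s_n ≠ 0) converges to j_1/2 = (a + √(a²+4b))/2 as n → ∞. -/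
/-!
The roots `r₁, r₂ = (a ± √(a² + 4b)) / 2` of `x² = a x + b` are real and distinct, so Binet's
formula gives `s n = A r₁ⁿ + B r₂ⁿ`, where `A` is a nonzero multiple of
`2 c₁ - (a - √(a² + 4b)) c₀`. Since `a > 0` we have `|r₂| < r₁`, so with `t = r₂ / r₁` the ratio
`s (n + 1) / s n = (A r₁ + B r₂ tⁿ) / (A + B tⁿ)` tends to `r₁` because `tⁿ → 0` and `A ≠ 0`.
-/

open Filter Topology

theorem eq_mul_pow_add_mul_pow_of_recurrence {R : Type*} [CommRing R] {p q r₁ r₂ A B : R}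
    {s : ℕ → R} (hrec : ∀ n, s (n + 2) = p * s (n + 1) + q * s n)
    (hr₁ : r₁ ^ 2 = p * r₁ + q) (hr₂ : r₂ ^ 2 = p * r₂ + q)
    (h0 : s 0 = A + B) (h1 : s 1 = A * r₁ + B * r₂) (n : ℕ) :
    s n = A * r₁ ^ n + B * r₂ ^ n := by
  induction n using Nat.twoStepInduction with
  | zero => simpa using h0
  | one => simpa using h1
  | more n ih₀ ih₁ =>
    rw [hrec, ih₀, ih₁]
    linear_combination (-(A * r₁ ^ n)) * hr₁ + (-(B * r₂ ^ n)) * hr₂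

theorem binet_of_recurrence {K : Type*} [Field K] {p q r₁ r₂ : K} {s : ℕ → K}
    (hrec : ∀ n, s (n + 2) = p * s (n + 1) + q * s n)
    (hr₁ : r₁ ^ 2 = p * r₁ + q) (hr₂ : r₂ ^ 2 = p * r₂ + q) (hne : r₁ ≠ r₂) (n : ℕ) :
    s n = (s 1 - r₂ * s 0) / (r₁ - r₂) * r₁ ^ n + (r₁ * s 0 - s 1) / (r₁ - r₂) * r₂ ^ n := by
  have hsub : r₁ - r₂ ≠ 0 := sub_ne_zero.mpr hne
  refine eq_mul_pow_add_mul_pow_of_recurrence hrec hr₁ hr₂ ?_ ?_ n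
  · field_simp
    ring
  · field_simp
    ring

theorem tendsto_div_of_eq_mul_pow_add_mul_pow {𝕜 : Type*} [NormedField 𝕜] {r₁ r₂ A B : 𝕜}
    {s : ℕ → 𝕜} (hs : ∀ n, s n = A * r₁ ^ n + B * r₂ ^ n) (hr : ‖r₂‖ < ‖r₁‖) (hA : A ≠ 0) :
    Tendsto (fun n => s (n + 1) / s n) atTop (𝓝 r₁) := by
  have hr₁ : r₁ ≠ 0 := norm_pos_iff.mp ((norm_nonneg r₂).trans_lt hr)
  set t := r₂ / r₁
  have ht : Tendsto (fun n => t ^ n) atTop (𝓝 0) :=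
    tendsto_pow_atTop_nhds_zero_of_norm_lt_one <| by
      rwa [norm_div, div_lt_one (norm_pos_iff.mpr hr₁)]
  have hlim : Tendsto (fun n => (A * r₁ + B * r₂ * t ^ n) / (A + B * t ^ n)) atTop
      (𝓝 ((A * r₁ + B * r₂ * 0) / (A + B * 0))) :=
    (tendsto_const_nhds.add (ht.const_mul _)).div (tendsto_const_nhds.add (ht.const_mul _))
      (by simpa using hA)
  rw [mul_zero, mul_zero, add_zero, add_zero, mul_div_cancel_left₀ _ hA] at hlim
  refine hlim.congr fun n => ?_
  have hpow : r₂ ^ n = t ^ n * r₁ ^ n := by rw [div_pow, div_mul_cancel₀ _ (pow_ne_zero n hr₁)]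
  rw [hs, hs, pow_succ, pow_succ, hpow, ← mul_div_mul_right _ _ (pow_ne_zero n hr₁)]
  ring_nf

theorem tendsto_div_of_recurrence {𝕜 : Type*} [NormedField 𝕜] {p q r₁ r₂ : 𝕜} {s : ℕ → 𝕜}
    (hrec : ∀ n, s (n + 2) = p * s (n + 1) + q * s n)
    (hr₁ : r₁ ^ 2 = p * r₁ + q) (hr₂ : r₂ ^ 2 = p * r₂ + q) (hr : ‖r₂‖ < ‖r₁‖)
    (hs : s 1 - r₂ * s 0 ≠ 0) :
    Tendsto (fun n => s (n + 1) / s n) atTop (𝓝 r₁) := by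
  have hne : r₁ ≠ r₂ := fun h => hr.ne (h ▸ rfl)
  exact tendsto_div_of_eq_mul_pow_add_mul_pow (binet_of_recurrence hrec hr₁ hr₂ hne) hr
    (div_ne_zero hs (sub_ne_zero.mpr hne))

theorem sq_eq_mul_add_of_sq_eq_discrim {p q d : ℝ} (hd : d ^ 2 = p ^ 2 + 4 * q) :
    ((p + d) / 2) ^ 2 = p * ((p + d) / 2) + q := by
  linear_combination hd / 4

theorem stmt_8_general (a b : ℕ) (ha : 0 < a) (c0 c1 : ℤ) (s : ℕ → ℝ)
    (hs0 : s 0 = c0) (hs1 : s 1 = c1)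
    (hrec : ∀ n : ℕ, s (n + 2) = a * s (n + 1) + b * s n)
    (h2 : 2 * (c1 : ℝ) - ((a : ℝ) - Real.sqrt ((a : ℝ) ^ 2 + 4 * b)) * c0 ≠ 0) :
    Filter.Tendsto (fun n : ℕ => s (n + 1) / s n) Filter.atTop
      (nhds (((a : ℝ) + Real.sqrt ((a : ℝ) ^ 2 + 4 * b)) / 2)) := by
  set d := Real.sqrt ((a : ℝ) ^ 2 + 4 * b)
  have ha' : (0 : ℝ) < a := Nat.cast_pos.mpr ha
  have hd : d ^ 2 = (a : ℝ) ^ 2 + 4 * b := Real.sq_sqrt (by positivity)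
  have hd₀ : 0 < d := Real.sqrt_pos.mpr (by positivity)
  refine tendsto_div_of_recurrence hrec (sq_eq_mul_add_of_sq_eq_discrim hd)
    (sq_eq_mul_add_of_sq_eq_discrim (d := -d) (by rwa [neg_sq])) ?_ ?_
  · rw [Real.norm_eq_abs, Real.norm_eq_abs, abs_of_pos (by positivity : 0 < ((a : ℝ) + d) / 2),
      abs_lt]
    constructor <;> linarith
  · rw [hs0, hs1]
    contrapose! h2
    linear_combination 2 * h2

theorem stmt_8 (a b : ℕ) (ha : 0 < a) (hb : 0 < b) (c0 c1 : ℤ)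
    (hc : (c0, c1) ≠ (0, 0)) (s : ℕ → ℝ)
    (hs0 : s 0 = c0) (hs1 : s 1 = c1)
    (hrec : ∀ n : ℕ, s (n + 2) = a * s (n + 1) + b * s n)
    (h1 : 2 * (c1 : ℝ) - ((a : ℝ) + Real.sqrt ((a : ℝ) ^ 2 + 4 * b)) * c0 ≠ 0)
    (h2 : 2 * (c1 : ℝ) - ((a : ℝ) - Real.sqrt ((a : ℝ) ^ 2 + 4 * b)) * c0 ≠ 0) :
    Filter.Tendsto (fun n : ℕ => s (n + 1) / s n) Filter.atTop
      (nhds (((a : ℝ) + Real.sqrt ((a : ℝ) ^ 2 + 4 * b)) / 2)) :=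
  stmt_8_general a b ha c0 c1 s hs0 hs1 hrec h2
end

section
/- Let (s_n) be the generalized Fibonacci sequence with parameters a, b ∈ ℕ⁺ (a + b > 1), c_0, c_1 ∈ ℤ, (c_0,c_1) ≠ (0,0), and let (b_0(d),…,b_d(d)) be the unique solution of B_d·(b_0,…,b_d)^T = 2·(C(d,0)2^d, …, C(d,d)2^0)^T. Define F(x) = ∑_{i=0}^d b_i(d)·x^i, G(x) = −2(x+1)^d + b·∑_{i=0}^d b_i(d)·(x+1)^i, and H = 2c_0 + 2^{d+1}c_1 − (a·c_1 + b·c_0)·∑_{i=0}^d b_i(d) − b·c_1·∑_{i=0}^d 2^i·b_i(d). Then for all positive integers n: 2·∑_{k=1}^n k^d·s_{k−1} = F(n)·s_{n+1} + G(n)·s_n + H. -/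
/-!
Write `P x = ∑ vᵢ xⁱ`. Column `j` of `B_d` lists the coefficients of
`b (x+2)ʲ + a (x+1)ʲ - xʲ`, so `B_d v` is the coefficient vector of `b P(x+2) + a P(x+1) - P(x)`
and the linear system says `b P(x+2) + a P(x+1) - P(x) = 2 (x+2)ᵈ`. Taking `F = P` and
`G(x) = b P(x+1) - 2 (x+1)ᵈ`, this identity together with the recurrence turns the step
`n → n+1` of the summation formula into an identity, and `H` makes the formula hold at `n = 1`.
-/

open Finset Matrix

section

variable {R : Type*} [CommRing R]

theorem add_pow_eq_sum_range_of_lt (x y : R) {j m : ℕ} (hj : j < m) :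
    (x + y) ^ j = ∑ k ∈ range m, x ^ k * y ^ (j - k) * (j.choose k : R) := by
  rw [add_pow]
  refine sum_subset (range_subset_range.2 hj) fun k _ hk => ?_
  rw [Nat.choose_eq_zero_of_lt (by simpa using hk), Nat.cast_zero, mul_zero]

/-- The matrix `B_d` of the paper. -/
def fibMatrix (a b : R) (d : ℕ) : Matrix (Fin (d + 1)) (Fin (d + 1)) R :=
  of fun i j =>
    if (j : ℕ) < (i : ℕ) then 0
    else if (i : ℕ) = (j : ℕ) then a + b - 1
    else (2 ^ ((j : ℕ) - (i : ℕ)) * b + a) * ((j : ℕ).choose i : R)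

theorem fibMatrix_apply (a b : R) {d : ℕ} (i j : Fin (d + 1)) :
    fibMatrix a b d i j =
      (b * 2 ^ ((j : ℕ) - i) + a) * ((j : ℕ).choose i : R) - if i = j then 1 else 0 := by
  simp only [fibMatrix, of_apply, Fin.val_inj]
  split_ifs with hlt hij hij
  · omega
  · simp [Nat.choose_eq_zero_of_lt hlt]
  · subst hij
    simp
    ring
  · ring

theorem sum_fibMatrix_mul_pow (a b x : R) {d : ℕ} (j : Fin (d + 1)) :
    ∑ k, fibMatrix a b d k j * x ^ (k : ℕ) =
      b * (x + 2) ^ (j : ℕ) + a * (x + 1) ^ (j : ℕ) - x ^ (j : ℕ) := by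
  rw [add_pow_eq_sum_range_of_lt x 2 j.isLt, add_pow_eq_sum_range_of_lt x 1 j.isLt, mul_sum,
    mul_sum, ← sum_add_distrib, ← Fin.sum_univ_eq_sum_range]
  simp only [fibMatrix_apply, sub_mul, sum_sub_distrib, ite_mul, one_mul, zero_mul, sum_ite_eq',
    mem_univ, if_true, one_pow, mul_one]
  congr 1
  exact sum_congr rfl fun k _ => by ring

theorem sum_fibMatrix_mulVec_mul_pow (a b x : R) {d : ℕ} (v : Fin (d + 1) → R) :
    ∑ k, (fibMatrix a b d *ᵥ v) k * x ^ (k : ℕ) =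
      b * ∑ i, v i * (x + 2) ^ (i : ℕ) + a * ∑ i, v i * (x + 1) ^ (i : ℕ) -
        ∑ i, v i * x ^ (i : ℕ) := by
  simp only [mulVec, dotProduct, sum_mul]
  rw [sum_comm, mul_sum, mul_sum, ← sum_add_distrib, ← sum_sub_distrib]
  refine sum_congr rfl fun j _ => ?_
  simp_rw [mul_right_comm _ (v j), ← sum_mul, sum_fibMatrix_mul_pow]
  ring

theorem sum_choose_mul_two_pow_mul_pow (x : R) (d : ℕ) :
    ∑ k : Fin (d + 1), (d.choose k : R) * 2 ^ (d - (k : ℕ)) * x ^ (k : ℕ) = (x + 2) ^ d := by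
  rw [add_pow, ← Fin.sum_univ_eq_sum_range]
  exact sum_congr rfl fun k _ => by ring

theorem two_mul_sum_Icc_pow_mul_eq {a b : R} {s : ℕ → R}
    (hrec : ∀ n, s (n + 2) = a * s (n + 1) + b * s n) {d : ℕ} {P : R → R}
    (hP : ∀ x, b * P (x + 2) + a * P (x + 1) - P x = 2 * (x + 2) ^ d) {n : ℕ} (hn : 1 ≤ n) :
    2 * ∑ k ∈ Icc 1 n, (k : R) ^ d * s (k - 1) =
      P n * s (n + 1) + (b * P (n + 1) - 2 * (n + 1) ^ d) * s n +
        (2 * s 0 - P 1 * s 2 - (b * P 2 - 2 * 2 ^ d) * s 1) := by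
  induction n, hn using Nat.le_induction with
  | base => norm_num
  | succ n _ ih =>
    rw [sum_Icc_succ_top (by omega), mul_add, ih, hrec n]
    push_cast
    rw [add_assoc (n : R), one_add_one_eq_two]
    linear_combination (-s (n + 1)) * hP n

end

theorem stmt_11_general (a b : ℕ)
    (c0 c1 : ℤ) (s : ℕ → ℝ)
    (hs0 : s 0 = c0) (hs1 : s 1 = c1)
    (hrec : ∀ n : ℕ, s (n + 2) = a * s (n + 1) + b * s n)
    (d : ℕ) (v : Fin (d + 1) → ℝ)
    (hv : (Matrix.of fun i j : Fin (d + 1) =>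
        if (j : ℕ) < (i : ℕ) then (0 : ℝ)
        else if (i : ℕ) = (j : ℕ) then (a : ℝ) + b - 1
        else (2 ^ ((j : ℕ) - (i : ℕ)) * (b : ℝ) + a) *
          (Nat.choose (j : ℕ) (i : ℕ) : ℝ)).mulVec v =
      fun k : Fin (d + 1) => 2 * ((Nat.choose d (k : ℕ) : ℝ) * 2 ^ (d - (k : ℕ))))
    (F G : ℝ → ℝ) (H : ℝ)
    (hF : ∀ x : ℝ, F x = ∑ i : Fin (d + 1), v i * x ^ (i : ℕ))
    (hG : ∀ x : ℝ, G x = -2 * (x + 1) ^ d + (∑ i : Fin (d + 1), v i * (x + 1) ^ (i : ℕ)) * b)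
    (hH : H = 2 * c0 + 2 ^ (d + 1) * c1
      - ((a : ℝ) * c1 + (b : ℝ) * c0) * ∑ i : Fin (d + 1), v i
      - (b : ℝ) * c1 * ∑ i : Fin (d + 1), 2 ^ (i : ℕ) * v i) :
    ∀ n : ℕ, 1 ≤ n →
      2 * ∑ k ∈ Finset.Icc 1 n, (k : ℝ) ^ d * s (k - 1) =
        F n * s (n + 1) + G n * s n + H := by
  have hBv : fibMatrix (a : ℝ) b d *ᵥ v =
      fun k : Fin (d + 1) => 2 * ((d.choose k : ℝ) * 2 ^ (d - (k : ℕ))) := hv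
  have hFrec (x : ℝ) : b * F (x + 2) + a * F (x + 1) - F x = 2 * (x + 2) ^ d :=
    calc b * F (x + 2) + a * F (x + 1) - F x
        = ∑ k, (fibMatrix (a : ℝ) b d *ᵥ v) k * x ^ (k : ℕ) := by
          simp only [hF, sum_fibMatrix_mulVec_mul_pow]
      _ = 2 * (x + 2) ^ d := by
          rw [hBv, ← sum_choose_mul_two_pow_mul_pow, mul_sum]
          exact sum_congr rfl fun k _ => by ring
  intro n hn
  rw [two_mul_sum_Icc_pow_mul_eq hrec hFrec hn, hG, ← hF, hH, hF 1, hF 2, hrec 0, hs0, hs1]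
  simp only [one_pow, mul_comm (v _), one_mul]
  ring

theorem stmt_11 (a b : ℕ) (ha : 0 < a) (hb : 0 < b) (hab : 1 < a + b)
    (c0 c1 : ℤ) (hc : (c0, c1) ≠ (0, 0)) (s : ℕ → ℝ)
    (hs0 : s 0 = c0) (hs1 : s 1 = c1)
    (hrec : ∀ n : ℕ, s (n + 2) = a * s (n + 1) + b * s n)
    (d : ℕ) (v : Fin (d + 1) → ℝ)
    (hv : (Matrix.of fun i j : Fin (d + 1) =>
        if (j : ℕ) < (i : ℕ) then (0 : ℝ)
        else if (i : ℕ) = (j : ℕ) then (a : ℝ) + b - 1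
        else (2 ^ ((j : ℕ) - (i : ℕ)) * (b : ℝ) + a) *
          (Nat.choose (j : ℕ) (i : ℕ) : ℝ)).mulVec v =
      fun k : Fin (d + 1) => 2 * ((Nat.choose d (k : ℕ) : ℝ) * 2 ^ (d - (k : ℕ))))
    (F G : ℝ → ℝ) (H : ℝ)
    (hF : ∀ x : ℝ, F x = ∑ i : Fin (d + 1), v i * x ^ (i : ℕ))
    (hG : ∀ x : ℝ, G x = -2 * (x + 1) ^ d + (∑ i : Fin (d + 1), v i * (x + 1) ^ (i : ℕ)) * b)
    (hH : H = 2 * c0 + 2 ^ (d + 1) * c1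
      - ((a : ℝ) * c1 + (b : ℝ) * c0) * ∑ i : Fin (d + 1), v i
      - (b : ℝ) * c1 * ∑ i : Fin (d + 1), 2 ^ (i : ℕ) * v i) :
    ∀ n : ℕ, 1 ≤ n →
      2 * ∑ k ∈ Finset.Icc 1 n, (k : ℝ) ^ d * s (k - 1) =
        F n * s (n + 1) + G n * s n + H :=
  stmt_11_general a b c0 c1 s hs0 hs1 hrec d v hv F G H hF hG hH
end

section
/- Let d be a nonnegative integer, a, b positive integers with a + b > 1, and let F(x) = ∑_{i=0}^d b_i(d)·x^i and G(x) = −2(x+1)^d + b·∑_{i=0}^d b_i(d)·(x+1)^i, where (b_0(d),…,b_d(d)) is the unique solution of the matrix equation B_d·(b_0,…,b_d)^T = 2·(C(d,0)2^d,…,C(d,d)2^0)^T. Then for all real x: F(x) − G(x+1) = a·F(x+1) and 2(x+1)^d + G(x) = b·F(x+1). -/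
/-! Row `i` of `B_d *ᵥ v = c` compares the coefficients of `x^i` in
`a P(x+1) + b P(x+2) - P(x)` and in `2 (x+2)^d`, where `P(x) = ∑ vᵢ xⁱ`; hence the two
polynomials agree. Since `F = P` and `G(x) = b P(x+1) - 2 (x+1)^d`, the first claim is this
identity at `x` and the second is immediate. -/

open Finset Matrix

theorem add_pow_eq_sum_fin {R : Type*} [CommSemiring R] (x c : R) {n d : ℕ} (hn : n ≤ d) :
    (x + c) ^ n = ∑ k : Fin (d + 1), x ^ (k : ℕ) * c ^ (n - k) * (n.choose k : R) := by
  rw [add_pow, Fin.sum_univ_eq_sum_range (fun k => x ^ k * c ^ (n - k) * (n.choose k : R))]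
  refine sum_subset (range_subset_range.mpr (by omega)) fun k _ hk => ?_
  rw [Nat.choose_eq_zero_of_lt (by simpa using hk), Nat.cast_zero, mul_zero]

section ShiftMatrix

variable {R : Type*} [CommRing R] (a b : R) (d : ℕ)

/-- The matrix `B_d`: its column `j` lists the coefficients of `a (x+1)^j + b (x+2)^j - x^j`. -/
def shiftMatrix : Matrix (Fin (d + 1)) (Fin (d + 1)) R :=
  Matrix.of fun i j =>
    if (j : ℕ) < (i : ℕ) then 0
    else if (i : ℕ) = (j : ℕ) then a + b - 1
    else (2 ^ ((j : ℕ) - (i : ℕ)) * b + a) * (Nat.choose (j : ℕ) (i : ℕ) : R)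

variable {a b d}

theorem shiftMatrix_apply (i j : Fin (d + 1)) :
    shiftMatrix a b d i j =
      (a * 1 ^ ((j : ℕ) - i) + b * 2 ^ ((j : ℕ) - i)) * ((j : ℕ).choose i : R) -
        if i = j then 1 else 0 := by
  rw [shiftMatrix, of_apply]
  rcases lt_trichotomy (j : ℕ) i with hji | hji | hij
  · have hne : i ≠ j := fun h => hji.ne (by rw [h])
    simp [hji, hne, Nat.choose_eq_zero_of_lt hji]
  · obtain rfl := Fin.ext hji
    simp
  · have hne : i ≠ j := fun h => hij.ne (by rw [h])
    simp only [hij.not_gt, ↓reduceIte, hij.ne, one_pow, mul_one, hne, sub_zero]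
    ring

theorem pow_vecMul_shiftMatrix (x : R) (j : Fin (d + 1)) :
    ((fun k : Fin (d + 1) => x ^ (k : ℕ)) ᵥ* shiftMatrix a b d) j =
      a * (x + 1) ^ (j : ℕ) + b * (x + 2) ^ (j : ℕ) - x ^ (j : ℕ) := by
  have hj : (j : ℕ) ≤ d := Nat.lt_succ_iff.mp j.isLt
  simp only [vecMul, dotProduct, shiftMatrix_apply, mul_sub, mul_ite, mul_one, mul_zero,
    sum_sub_distrib, sum_ite_eq', mem_univ, if_true]
  rw [add_pow_eq_sum_fin x 1 hj, add_pow_eq_sum_fin x 2 hj, mul_sum, mul_sum, ← sum_add_distrib]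
  congr 1
  exact sum_congr rfl fun k _ => by ring

theorem shiftMatrix_mulVec_dotProduct_pow (v : Fin (d + 1) → R) (x : R) :
    (shiftMatrix a b d *ᵥ v) ⬝ᵥ (fun k : Fin (d + 1) => x ^ (k : ℕ)) =
      a * ∑ i, v i * (x + 1) ^ (i : ℕ) + b * ∑ i, v i * (x + 2) ^ (i : ℕ) -
        ∑ i, v i * x ^ (i : ℕ) := by
  rw [dotProduct_comm, dotProduct_mulVec, dotProduct_comm]
  simp only [dotProduct, pow_vecMul_shiftMatrix, mul_sub, mul_add, sum_sub_distrib,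
    sum_add_distrib, mul_sum]
  congr 2 <;> exact sum_congr rfl fun i _ => by ring

end ShiftMatrix

theorem binomial_vec_dotProduct_pow {R : Type*} [CommRing R] (d : ℕ) (x : R) :
    (fun k : Fin (d + 1) => 2 * ((d.choose k : R) * 2 ^ (d - (k : ℕ)))) ⬝ᵥ
      (fun k : Fin (d + 1) => x ^ (k : ℕ)) = 2 * (x + 2) ^ d := by
  rw [add_pow_eq_sum_fin x 2 le_rfl, mul_sum]
  exact sum_congr rfl fun k _ => by ring

theorem stmt_12_general (a b : ℕ)
    (d : ℕ) (v : Fin (d + 1) → ℝ)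
    (hv : (Matrix.of fun i j : Fin (d + 1) =>
        if (j : ℕ) < (i : ℕ) then (0 : ℝ)
        else if (i : ℕ) = (j : ℕ) then (a : ℝ) + b - 1
        else (2 ^ ((j : ℕ) - (i : ℕ)) * (b : ℝ) + a) *
          (Nat.choose (j : ℕ) (i : ℕ) : ℝ)).mulVec v =
      fun k : Fin (d + 1) => 2 * ((Nat.choose d (k : ℕ) : ℝ) * 2 ^ (d - (k : ℕ))))
    (F G : ℝ → ℝ)
    (hF : ∀ x : ℝ, F x = ∑ i : Fin (d + 1), v i * x ^ (i : ℕ))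
    (hG : ∀ x : ℝ, G x = -2 * (x + 1) ^ d + (∑ i : Fin (d + 1), v i * (x + 1) ^ (i : ℕ)) * b) :
    ∀ x : ℝ, F x - G (x + 1) = a * F (x + 1) ∧ 2 * (x + 1) ^ d + G x = b * F (x + 1) := by
  intro x
  have key := congrArg (· ⬝ᵥ fun k : Fin (d + 1) => x ^ (k : ℕ)) hv
  change (shiftMatrix (a : ℝ) b d *ᵥ v) ⬝ᵥ _ = _ at key
  rw [shiftMatrix_mulVec_dotProduct_pow, binomial_vec_dotProduct_pow] at key
  refine ⟨?_, ?_⟩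
  · rw [hF, hG, hF, show x + 1 + 1 = x + 2 by ring]
    linarith
  · rw [hG, hF]
    ring

theorem stmt_12 (a b : ℕ) (ha : 0 < a) (hb : 0 < b) (hab : 1 < a + b)
    (d : ℕ) (v : Fin (d + 1) → ℝ)
    (hv : (Matrix.of fun i j : Fin (d + 1) =>
        if (j : ℕ) < (i : ℕ) then (0 : ℝ)
        else if (i : ℕ) = (j : ℕ) then (a : ℝ) + b - 1
        else (2 ^ ((j : ℕ) - (i : ℕ)) * (b : ℝ) + a) *
          (Nat.choose (j : ℕ) (i : ℕ) : ℝ)).mulVec v =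
      fun k : Fin (d + 1) => 2 * ((Nat.choose d (k : ℕ) : ℝ) * 2 ^ (d - (k : ℕ))))
    (F G : ℝ → ℝ)
    (hF : ∀ x : ℝ, F x = ∑ i : Fin (d + 1), v i * x ^ (i : ℕ))
    (hG : ∀ x : ℝ, G x = -2 * (x + 1) ^ d + (∑ i : Fin (d + 1), v i * (x + 1) ^ (i : ℕ)) * b) :
    ∀ x : ℝ, F x - G (x + 1) = a * F (x + 1) ∧ 2 * (x + 1) ^ d + G x = b * F (x + 1) :=
  stmt_12_general a b d v hv F G hF hG
end

section
/- Let (s_n) be the generalized Fibonacci sequence with a, b ∈ ℕ⁺, c_0, c_1 ∈ ℤ, (c_0,c_1) ≠ (0,0), and suppose both 2c_1 − j_1·c_0 ≠ 0 and 2c_1 − j_2·c_0 ≠ 0, where j_{1,2} = a ± √(a²+4b). If γ_1, γ_2, γ_3 are real polynomials with γ_1(n)·s_{n+1} + γ_2(n)·s_n + γ_3(n) = 0 for all positive integers n, then γ_1, γ_2, γ_3 are all zero polynomials. -/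
/-!
By Binet's formula `s n = A r₁ⁿ + B r₂ⁿ` with `r₁,₂ = j₁,₂ / 2`, and the two nonvanishing
conditions say exactly `A ≠ 0` and `B ≠ 0`. Since `a, b > 0` we have `r₁ > 1` and
`-r₁ < r₂ < 0`, so the relation becomes `P(n) r₁ⁿ + Q(n) r₂ⁿ + R(n) = 0` with `P, Q, R`
polynomials. Dividing by the dominant exponential forces each of `P`, `Q`, `R` to vanish in turn
(when `r₂ = -1`, `Q ± R` vanish along even resp. odd `n`), and
`P = A (r₁ γ₁ + γ₂)`, `Q = B (r₂ γ₁ + γ₂)`, `R = γ₃` then give `γ₁ = γ₂ = γ₃ = 0`.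
-/

open Filter Polynomial Topology

theorem binet_of_recurrence_s15 {K : Type*} [CommRing K] {a b r t : K} {s : ℕ → K}
    (hr : r ^ 2 = a * r + b) (ht : t ^ 2 = a * t + b)
    (hrec : ∀ n, s (n + 2) = a * s (n + 1) + b * s n) (n : ℕ) :
    (r - t) * s n = (s 1 - t * s 0) * r ^ n - (s 1 - r * s 0) * t ^ n := by
  induction n using Nat.twoStepInduction with
  | zero => ring
  | one => ring
  | more n ih₀ ih₁ =>
    rw [hrec]
    linear_combination b * ih₀ + a * ih₁ - (s 1 - t * s 0) * r ^ n * hr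
      + (s 1 - r * s 0) * t ^ n * ht

namespace Polynomial

section

variable (P : ℝ[X])

theorem tendsto_eval_natCast_mul_pow {r : ℝ} (hr : |r| < 1) :
    Tendsto (fun n : ℕ => P.eval (n : ℝ) * r ^ n) atTop (𝓝 0) := by
  induction P using Polynomial.induction_on' with
  | add p q hp hq => simpa only [eval_add, add_mul, add_zero] using hp.add hq
  | monomial k c =>
    simpa [mul_assoc] using (tendsto_pow_const_mul_const_pow_of_abs_lt_one k hr).const_mul c

theorem tendsto_eval_natCast_mul_pow_div_pow {r t : ℝ} (h : |t| < |r|) :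
    Tendsto (fun n : ℕ => P.eval (n : ℝ) * t ^ n / r ^ n) atTop (𝓝 0) := by
  have hr : r ≠ 0 := abs_pos.mp ((abs_nonneg t).trans_lt h)
  have htr : |t / r| < 1 := by rwa [abs_div, div_lt_one (abs_pos.mpr hr)]
  simpa only [mul_div_assoc, div_pow] using P.tendsto_eval_natCast_mul_pow htr

theorem eq_zero_of_tendsto_eval_natCast
    (h : Tendsto (fun n : ℕ => P.eval (n : ℝ)) atTop (𝓝 0)) : P = 0 := by
  have hdeg : P.degree ≤ 0 := by
    by_contra! hdeg
    exact not_tendsto_atTop_of_tendsto_nhds h.abs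
      ((P.abs_tendsto_atTop hdeg).comp tendsto_natCast_atTop_atTop)
  rw [eq_C_of_degree_le_zero hdeg] at h ⊢
  simpa using h

theorem eq_zero_of_frequently_eval_natCast_eq_zero
    (h : ∃ᶠ n : ℕ in atTop, P.eval (n : ℝ) = 0) : P = 0 := by
  refine P.eq_zero_of_infinite_isRoot <|
    ((Nat.frequently_atTop_iff_infinite.mp h).image Nat.cast_injective.injOn).mono ?_
  rintro _ ⟨n, hn, rfl⟩
  exact hn

theorem eq_zero_of_eventually_eval_natCast_mul_pow_add {r : ℝ} (hr : r ≠ 0) {f : ℕ → ℝ}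
    (hf : Tendsto (fun n => f n / r ^ n) atTop (𝓝 0))
    (h : ∀ᶠ n : ℕ in atTop, P.eval (n : ℝ) * r ^ n + f n = 0) : P = 0 := by
  refine P.eq_zero_of_tendsto_eval_natCast ((neg_zero (G := ℝ) ▸ hf.neg).congr' ?_)
  filter_upwards [h] with n hn
  field_simp
  linarith

end

theorem eq_zero_of_eventually_eval_natCast_mul_pow_add_eval_natCast_mul_pow {P Q : ℝ[X]}
    {r t : ℝ} (hr : r ≠ 0) (ht : t ≠ 0) (hrt : r ≠ t)
    (h : ∀ᶠ n : ℕ in atTop, P.eval (n : ℝ) * r ^ n + Q.eval (n : ℝ) * t ^ n = 0) :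
    P = 0 ∧ Q = 0 := by
  wlog hle : |t| ≤ |r| generalizing P Q r t
  · refine (this ht hr hrt.symm ?_ (le_of_not_ge hle)).symm
    simpa only [add_comm] using h
  rcases hle.lt_or_eq with hlt | heq
  · have hP : P = 0 :=
      P.eq_zero_of_eventually_eval_natCast_mul_pow_add hr
        (Q.tendsto_eval_natCast_mul_pow_div_pow hlt) h
    refine ⟨hP, Q.eq_zero_of_frequently_eval_natCast_eq_zero (h.mono fun n hn => ?_).frequently⟩
    simpa [hP, ht] using hn
  · obtain rfl : t = -r := (abs_eq_abs.mp heq).resolve_left hrt.symm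
    have hsign : ∀ᶠ n : ℕ in atTop, P.eval (n : ℝ) + (-1) ^ n * Q.eval (n : ℝ) = 0 := by
      filter_upwards [h] with n hn
      rw [neg_eq_neg_one_mul, mul_pow] at hn
      exact (mul_eq_zero.mp (by linear_combination hn)).resolve_right (pow_ne_zero n hr)
    have hsum : P + Q = 0 := eq_zero_of_frequently_eval_natCast_eq_zero _ <|
      (Nat.frequently_even.and_eventually hsign).mono fun n ⟨hn, hPQ⟩ => by
        simpa [hn.neg_one_pow] using hPQ
    have hdiff : P - Q = 0 := eq_zero_of_frequently_eval_natCast_eq_zero _ <|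
      (Nat.frequently_odd.and_eventually hsign).mono fun n ⟨hn, hPQ⟩ => by
        simpa [hn.neg_one_pow, sub_eq_add_neg] using hPQ
    have hP : P = 0 := by
      have : (2 : ℝ[X]) * P = 0 := by linear_combination hsum + hdiff
      simpa using this
    exact ⟨hP, by simpa [hP] using hsum⟩

theorem eq_zero_of_eventually_eval_natCast_mul_pow_add_eval_natCast_mul_pow_add_eval
    {P Q R : ℝ[X]} {r t : ℝ} (hr : 1 < |r|) (htr : |t| < |r|) (ht₀ : t ≠ 0) (ht₁ : t ≠ 1)
    (h : ∀ᶠ n : ℕ in atTop,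
      P.eval (n : ℝ) * r ^ n + Q.eval (n : ℝ) * t ^ n + R.eval (n : ℝ) = 0) :
    P = 0 ∧ Q = 0 ∧ R = 0 := by
  have h' : ∀ᶠ n : ℕ in atTop,
      P.eval (n : ℝ) * r ^ n + Q.eval (n : ℝ) * t ^ n + R.eval (n : ℝ) * 1 ^ n = 0 := by
    simpa only [one_pow, mul_one] using h
  have hP : P = 0 := by
    refine P.eq_zero_of_eventually_eval_natCast_mul_pow_add (abs_pos.mp (one_pos.trans hr)) ?_
      (by simpa only [add_assoc] using h')
    simpa only [add_div, add_zero] using (Q.tendsto_eval_natCast_mul_pow_div_pow htr).add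
      (R.tendsto_eval_natCast_mul_pow_div_pow (abs_one.trans_lt hr))
  refine ⟨hP, eq_zero_of_eventually_eval_natCast_mul_pow_add_eval_natCast_mul_pow ht₀ one_ne_zero
    ht₁ (h'.mono fun n hn => ?_)⟩
  simpa [hP] using hn

theorem eq_zero_of_eventually_eval_mul_succ_add_eval_mul_add_eval
    {γ₁ γ₂ γ₃ : ℝ[X]} {u : ℕ → ℝ} {r t A B : ℝ} (hr : 1 < |r|) (htr : |t| < |r|)
    (ht₀ : t ≠ 0) (ht₁ : t ≠ 1) (hA : A ≠ 0) (hB : B ≠ 0) (hu : ∀ n, u n = A * r ^ n + B * t ^ n)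
    (h : ∀ᶠ n : ℕ in atTop,
      γ₁.eval (n : ℝ) * u (n + 1) + γ₂.eval (n : ℝ) * u n + γ₃.eval (n : ℝ) = 0) :
    γ₁ = 0 ∧ γ₂ = 0 ∧ γ₃ = 0 := by
  have hexp : ∀ᶠ n : ℕ in atTop,
      (C A * (C r * γ₁ + γ₂)).eval (n : ℝ) * r ^ n + (C B * (C t * γ₁ + γ₂)).eval (n : ℝ) * t ^ n
        + γ₃.eval (n : ℝ) = 0 := by
    filter_upwards [h] with n hn
    simp only [eval_add, eval_mul, eval_C]
    linear_combination hn - γ₁.eval (n : ℝ) * hu (n + 1) - γ₂.eval (n : ℝ) * hu n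
  obtain ⟨hr₀, ht₀, hγ₃⟩ :=
    eq_zero_of_eventually_eval_natCast_mul_pow_add_eval_natCast_mul_pow_add_eval hr htr ht₀ ht₁ hexp
  replace hr₀ := (mul_eq_zero.mp hr₀).resolve_left (C_ne_zero.mpr hA)
  replace ht₀ := (mul_eq_zero.mp ht₀).resolve_left (C_ne_zero.mpr hB)
  have hγ₁ : γ₁ = 0 := by
    have : C (r - t) * γ₁ = 0 := by rw [C_sub]; linear_combination hr₀ - ht₀
    refine (mul_eq_zero.mp this).resolve_left (C_ne_zero.mpr (sub_ne_zero.mpr ?_))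
    rintro rfl
    exact htr.false
  exact ⟨hγ₁, by simpa [hγ₁] using hr₀, hγ₃⟩
end Polynomial

theorem stmt_15_general (a b : ℕ) (ha : 0 < a) (hb : 0 < b) (c0 c1 : ℤ)
    (s : ℕ → ℝ)
    (hs0 : s 0 = c0) (hs1 : s 1 = c1)
    (hrec : ∀ n : ℕ, s (n + 2) = a * s (n + 1) + b * s n)
    (h1 : 2 * (c1 : ℝ) - ((a : ℝ) + Real.sqrt ((a : ℝ) ^ 2 + 4 * b)) * c0 ≠ 0)
    (h2 : 2 * (c1 : ℝ) - ((a : ℝ) - Real.sqrt ((a : ℝ) ^ 2 + 4 * b)) * c0 ≠ 0)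
    (γ1 γ2 γ3 : Polynomial ℝ)
    (hγ : ∀ n : ℕ, 1 ≤ n →
      γ1.eval (n : ℝ) * s (n + 1) + γ2.eval (n : ℝ) * s n + γ3.eval (n : ℝ) = 0) :
    γ1 = 0 ∧ γ2 = 0 ∧ γ3 = 0 := by
  set d := Real.sqrt ((a : ℝ) ^ 2 + 4 * b)
  have hd : d ^ 2 = (a : ℝ) ^ 2 + 4 * b := Real.sq_sqrt (by positivity)
  have ha : (1 : ℝ) ≤ a := by exact_mod_cast ha
  have hb : (0 : ℝ) < b := by exact_mod_cast hb
  have had : (a : ℝ) < d := by nlinarith [Real.sqrt_nonneg ((a : ℝ) ^ 2 + 4 * b)]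
  have hd₀ : d ≠ 0 := by linarith
  set r₁ := ((a : ℝ) + d) / 2 with hr₁
  set r₂ := ((a : ℝ) - d) / 2 with hr₂
  clear_value r₁ r₂
  have hr₁_gt : 1 < r₁ := by rw [hr₁]; linarith
  have hr₂_neg : r₂ < 0 := by rw [hr₂]; linarith
  have hs : ∀ n, s n = (c1 - r₂ * c0) / d * r₁ ^ n + (r₁ * c0 - c1) / d * r₂ ^ n := fun n => by
    have := binet_of_recurrence_s15 (r := r₁) (t := r₂) (by rw [hr₁]; linear_combination hd / 4)
      (by rw [hr₂]; linear_combination hd / 4) hrec n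
    rw [hs0, hs1] at this
    field_simp
    linear_combination this - s n * (hr₁ - hr₂)
  refine eq_zero_of_eventually_eval_mul_succ_add_eval_mul_add_eval
    (by rwa [abs_of_pos (one_pos.trans hr₁_gt)])
    (by rw [abs_of_neg hr₂_neg, abs_of_pos (one_pos.trans hr₁_gt)]; linarith)
    hr₂_neg.ne (by linarith) ?_ ?_ hs ((eventually_ge_atTop 1).mono hγ)
  · exact div_ne_zero (fun h => h2 (by linear_combination 2 * h + 2 * c0 * hr₂)) hd₀
  · exact div_ne_zero (fun h => h1 (by linear_combination -2 * h + 2 * c0 * hr₁)) hd₀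

theorem stmt_15 (a b : ℕ) (ha : 0 < a) (hb : 0 < b) (c0 c1 : ℤ)
    (hc : (c0, c1) ≠ (0, 0)) (s : ℕ → ℝ)
    (hs0 : s 0 = c0) (hs1 : s 1 = c1)
    (hrec : ∀ n : ℕ, s (n + 2) = a * s (n + 1) + b * s n)
    (h1 : 2 * (c1 : ℝ) - ((a : ℝ) + Real.sqrt ((a : ℝ) ^ 2 + 4 * b)) * c0 ≠ 0)
    (h2 : 2 * (c1 : ℝ) - ((a : ℝ) - Real.sqrt ((a : ℝ) ^ 2 + 4 * b)) * c0 ≠ 0)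
    (γ1 γ2 γ3 : Polynomial ℝ)
    (hγ : ∀ n : ℕ, 1 ≤ n →
      γ1.eval (n : ℝ) * s (n + 1) + γ2.eval (n : ℝ) * s n + γ3.eval (n : ℝ) = 0) :
    γ1 = 0 ∧ γ2 = 0 ∧ γ3 = 0 :=
  stmt_15_general a b ha hb c0 c1 s hs0 hs1 hrec h1 h2 γ1 γ2 γ3 hγ
end

section
/- Let (s_n) be the generalized Fibonacci sequence with a, b ∈ ℕ⁺ (a + b > 1), c_0, c_1 ∈ ℤ, (c_0,c_1) ≠ (0,0). For every polynomial P(x) ∈ ℝ[x], there exist polynomials F_1, G_1, H_1 ∈ ℝ[x] such that 2·∑_{k=1}^n P(k)·s_{k−1} = F_1(n)·s_{n+1} + G_1(n)·s_n + H_1(n) for all positive integers n. -/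
/-!
Solve the difference equation `b f(x) + a f(x - 1) - f(x - 2) = P(x)` for a polynomial `f`:
the left side is `(a + b - 1) f` plus terms of lower degree, so the operator is surjective as soon
as `a + b ≠ 1`. With `g(x) = f(x - 1) - a f(x)`, the recurrence makes
`f(n) s(n + 1) + g(n) s(n)` increase by exactly `P(n + 1) s(n)` from `n` to `n + 1`, so the sum
telescopes.
-/

open Polynomial

namespace Polynomial

theorem degree_taylor_sub_lt {R : Type*} [CommRing R] (r : R) {f : R[X]} (hf : f ≠ 0) :
    (taylor r f - f).degree < f.degree := by
  simpa only [degree_taylor] using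
    degree_sub_lt_left (degree_taylor f r) (mt (taylor_eq_zero r f).mp hf)
      (leadingCoeff_taylor r f)

theorem surjective_of_degree_sub_smul_lt {K : Type*} [Field K] (L : K[X] →ₗ[K] K[X]) {c : K}
    (hc : c ≠ 0) (hL : ∀ p : K[X], p ≠ 0 → (L p - c • p).degree < p.degree) :
    Function.Surjective L := by
  intro q
  induction q using degree_lt_wf.induction with
  | _ q ih =>
  by_cases hq : q = 0
  · exact ⟨0, by rw [hq, map_zero]⟩
  have hlc : c⁻¹ * q.leadingCoeff ≠ 0 :=
    mul_ne_zero (inv_ne_zero hc) (leadingCoeff_ne_zero.mpr hq)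
  set p : K[X] := monomial q.natDegree (c⁻¹ * q.leadingCoeff)
  have hcp : c • p = monomial q.natDegree q.leadingCoeff := by
    rw [smul_monomial, smul_eq_mul, mul_inv_cancel_left₀ hc]
  have hp : p ≠ 0 := (monomial_eq_zero_iff _ _).not.mpr hlc
  have hpq : p.degree = q.degree := by
    rw [degree_monomial _ hlc, degree_eq_natDegree hq]
  have hlower : (q - L p).degree < q.degree := by
    have hsplit : q - L p = q.eraseLead - (L p - c • p) := by
      rw [← self_sub_monomial_natDegree_leadingCoeff, ← hcp]; abel
    rw [hsplit]
    exact (degree_sub_le _ _).trans_lt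
      (max_lt (degree_eraseLead_lt hq) (hpq ▸ hL p hp))
  obtain ⟨r, hr⟩ := ih _ hlower
  exact ⟨p + r, by rw [map_add, hr, add_sub_cancel]⟩

/-- `f(x) ↦ β f(x) + α f(x - 1) - f(x - 2)`, the adjoint of the recurrence
`s (n + 2) = α s (n + 1) + β s n` under summation by parts. -/
noncomputable def recurrenceOperator {R : Type*} [CommRing R] (α β : R) : R[X] →ₗ[R] R[X] :=
  β • LinearMap.id + α • taylor (-1) - taylor (-2)

section

variable {R : Type*} [CommRing R] (α β : R)

theorem eval_recurrenceOperator (f : R[X]) (x : R) :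
    (recurrenceOperator α β f).eval x = β * f.eval x + α * f.eval (x - 1) - f.eval (x - 2) := by
  simp [recurrenceOperator, taylor_eval, sub_eq_add_neg]

theorem recurrenceOperator_sub_smul (f : R[X]) :
    recurrenceOperator α β f - (α + β - 1) • f =
      α • (taylor (-1) f - f) - (taylor (-2) f - f) := by
  simp only [recurrenceOperator, LinearMap.sub_apply, LinearMap.add_apply, LinearMap.smul_apply,
    LinearMap.id_apply, smul_sub, sub_smul, add_smul, one_smul]
  abel

end

theorem recurrenceOperator_surjective {K : Type*} [Field K] {α β : K} (h : α + β ≠ 1) :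
    Function.Surjective (recurrenceOperator α β) := by
  refine surjective_of_degree_sub_smul_lt _ (sub_ne_zero.mpr h) fun f hf => ?_
  rw [recurrenceOperator_sub_smul]
  exact (degree_sub_le _ _).trans_lt (max_lt
    ((degree_smul_le _ _).trans_lt (degree_taylor_sub_lt _ hf)) (degree_taylor_sub_lt _ hf))

theorem sum_Icc_eval_recurrenceOperator_mul {R : Type*} [CommRing R] {α β : R} {s : ℕ → R}
    (hrec : ∀ n, s (n + 2) = α * s (n + 1) + β * s n) (f : R[X]) (n : ℕ) :
    let g := taylor (-1) f - C α * f
    ∑ k ∈ Finset.Icc 1 n, (recurrenceOperator α β f).eval (k : R) * s (k - 1) =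
      f.eval (n : R) * s (n + 1) + g.eval (n : R) * s n - (f.eval 0 * s 1 + g.eval 0 * s 0) := by
  intro g
  have hg (x : R) : g.eval x = f.eval (x - 1) - α * f.eval x := by
    simp [g, taylor_eval, sub_eq_add_neg]
  induction n with
  | zero => simp
  | succ n ih =>
    rw [Finset.sum_Icc_succ_top (Nat.le_add_left 1 n), ih, eval_recurrenceOperator, hrec n]
    push_cast
    simp only [hg, add_sub_cancel_right, show (n : R) + 1 - 2 = n - 1 by ring]
    ring

end Polynomial

theorem stmt_17_general (a b : ℕ) (hab : 1 < a + b) (s : ℕ → ℝ)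
    (hrec : ∀ n : ℕ, s (n + 2) = a * s (n + 1) + b * s n)
    (P : Polynomial ℝ) :
    ∃ F1 G1 H1 : Polynomial ℝ, ∀ n : ℕ, 1 ≤ n →
      2 * ∑ k ∈ Finset.Icc 1 n, P.eval (k : ℝ) * s (k - 1) =
        F1.eval (n : ℝ) * s (n + 1) + G1.eval (n : ℝ) * s n + H1.eval (n : ℝ) := by
  have hab' : (a : ℝ) + b ≠ 1 := by
    have : (2 : ℝ) ≤ a + b := by exact_mod_cast hab
    linarith
  obtain ⟨f, rfl⟩ := recurrenceOperator_surjective hab' P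
  set g := taylor (-1) f - C (a : ℝ) * f
  refine ⟨C 2 * f, C 2 * g, C (-2 * (f.eval 0 * s 1 + g.eval 0 * s 0)), fun n _ => ?_⟩
  rw [sum_Icc_eval_recurrenceOperator_mul hrec f n]
  simp only [eval_mul, eval_C]
  ring

theorem stmt_17 (a b : ℕ) (ha : 0 < a) (hb : 0 < b) (hab : 1 < a + b)
    (c0 c1 : ℤ) (hc : (c0, c1) ≠ (0, 0)) (s : ℕ → ℝ)
    (hs0 : s 0 = c0) (hs1 : s 1 = c1)
    (hrec : ∀ n : ℕ, s (n + 2) = a * s (n + 1) + b * s n)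
    (P : Polynomial ℝ) :
    ∃ F1 G1 H1 : Polynomial ℝ, ∀ n : ℕ, 1 ≤ n →
      2 * ∑ k ∈ Finset.Icc 1 n, P.eval (k : ℝ) * s (k - 1) =
        F1.eval (n : ℝ) * s (n + 1) + G1.eval (n : ℝ) * s n + H1.eval (n : ℝ) :=
  stmt_17_general a b hab s hrec P
end
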